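/- arXiv:math/0309227 — 4 statements merged into one kernel-verified Lean document; each statement's English description precedes it below -/
import Mathlib

section
/- Let T be a marked genus-labeled tree of total genus g with n total marked points which is stable, and suppose (g, n) ≠ (2, 0). Then the number of vertices v with gv(v) = 0 is at most g − 2 + n (as integers). -/
/-- A stable marked genus-labeled tree of total genus `g` with `n` marked points,
with `(g, n) ≠ (2, 0)`, has at most `g - 2 + n` vertices of genus `0`. -/
theorem genus_zero_vertices_le (V : Type*) [Fintype V] [Nonempty V] [DecidableEq V]
    (G : SimpleGraph V) [DecidableRel G.Adj] (hT : G.IsTree)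
    (gv m : V → ℕ) (g n : ℕ)
    (hg : g = ∑ v, gv v) (hn : n = ∑ v, m v)
    (hstable : ∀ v, 2 * (gv v : ℤ) - 2 + G.degree v + m v > 0)
    (hne : (g, n) ≠ (2, 0)) :
    ((Finset.univ.filter (fun v => gv v = 0)).card : ℤ) ≤ (g : ℤ) - 2 + n := by
  classical
  set Z : Finset V := Finset.univ.filter (fun v => gv v = 0) with hZ
  set P : Finset V := Finset.univ.filter (fun v => gv v ≠ 0) with hP
  have hedges : G.edgeFinset.card + 1 = Fintype.card V := hT.card_edgeFinset
  have hdegsum : ∑ v, G.degree v = 2 * G.edgeFinset.card :=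
    G.sum_degrees_eq_twice_card_edges
  -- P.card ≤ g
  have hPg : P.card ≤ g := by
    calc P.card = ∑ v ∈ P, 1 := by simp
    _ ≤ ∑ v ∈ P, gv v := Finset.sum_le_sum (fun v hv => by
        have := (Finset.mem_filter.mp hv).2; omega)
    _ ≤ ∑ v, gv v := Finset.sum_le_sum_of_subset (Finset.filter_subset _ _)
    _ = g := hg.symm
  -- stability on genus zero vertices
  have hstab0 : ∀ v ∈ Z, 3 ≤ G.degree v + m v := by
    intro v hv
    have h0 := (Finset.mem_filter.mp hv).2
    have := hstable v
    rw [h0] at this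
    push_cast at this
    omega
  have h3Z : 3 * Z.card ≤ ∑ v ∈ Z, (G.degree v + m v) := by
    calc 3 * Z.card = ∑ _v ∈ Z, 3 := by simp [Nat.mul_comm]
    _ ≤ _ := Finset.sum_le_sum hstab0
  have hmZ : ∑ v ∈ Z, m v ≤ n := by
    rw [hn]; exact Finset.sum_le_sum_of_subset (Finset.filter_subset _ _)
  have hsplit : ∑ v ∈ Z, G.degree v + ∑ v ∈ P, G.degree v = ∑ v, G.degree v := by
    rw [hZ, hP]
    exact Finset.sum_filter_add_sum_filter_not _ _ _
  have hZPcard : Z.card + P.card = Fintype.card V := by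
    rw [hZ, hP, Finset.card_filter_add_card_filter_not, Finset.card_univ]
  rcases Nat.lt_or_ge (Fintype.card V) 2 with hcard | hcard
  · -- one vertex
    have h1 : Fintype.card V = 1 := by
      have := Fintype.card_pos (α := V); omega
    obtain ⟨v, hv⟩ := Fintype.card_eq_one_iff.mp h1
    have huniv : (Finset.univ : Finset V) = {v} := by
      ext w; simp [hv w]
    have hdv : G.degree v = 0 := by
      have : ∑ w, G.degree w = 0 := by omega
      rw [huniv, Finset.sum_singleton] at this; exact this
    have hgv : g = gv v := by rw [hg, huniv, Finset.sum_singleton]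
    have hnv : n = m v := by rw [hn, huniv, Finset.sum_singleton]
    have hst := hstable v
    rw [hdv] at hst
    push_cast at hst
    have hZcases : Z.card = (if gv v = 0 then 1 else 0) := by
      rw [hZ, huniv]
      by_cases h : gv v = 0 <;> simp [Finset.filter_singleton, h]
    by_cases h : gv v = 0
    · rw [h] at hst
      norm_num at hst
      rw [hZcases, if_pos h]
      have : (3:ℤ) ≤ m v := by linarith
      push_cast
      omega
    · rw [hZcases, if_neg h]
      have h1g : 1 ≤ gv v := Nat.one_le_iff_ne_zero.mpr h
      have : (2:ℤ) * gv v - 2 + m v ≥ 1 := by linarith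
      have h2 : 2 * gv v + m v ≥ 3 := by push_cast at this ⊢; linarith
      push_cast
      rw [hgv, hnv]
      push_cast
      omega
  · -- at least two vertices: every vertex has positive degree
    have hdegpos : ∀ v : V, 1 ≤ G.degree v := by
      intro v
      obtain ⟨w, hw⟩ := Fintype.exists_ne_of_one_lt_card hcard v
      obtain ⟨p⟩ := hT.isConnected.preconnected v w
      cases p with
      | nil => exact absurd rfl hw.symm
      | cons h q => exact (G.degree_pos_iff_exists_adj v).mpr ⟨_, h⟩
    have hPdeg : P.card ≤ ∑ v ∈ P, G.degree v := by
      calc P.card = ∑ _v ∈ P, 1 := by simp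
      _ ≤ _ := Finset.sum_le_sum (fun v _ => hdegpos v)
    have hZdegm : ∑ v ∈ Z, (G.degree v + m v)
        = ∑ v ∈ Z, G.degree v + ∑ v ∈ Z, m v := Finset.sum_add_distrib
    -- 3Z ≤ Σ_Z deg + Σ_Z m ≤ (2(N-1) - Σ_P deg) + n
    have key : 3 * Z.card + P.card ≤ 2 * (Fintype.card V - 1) + n := by
      have h2e : 2 * G.edgeFinset.card = 2 * (Fintype.card V - 1) := by omega
      omega
    have hN : Fintype.card V ≥ 1 := Fintype.card_pos
    have : Z.card + 2 ≤ P.card + n := by omega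
    have : (Z.card : ℤ) + 2 ≤ (P.card : ℤ) + n := by exact_mod_cast this
    have : (P.card : ℤ) ≤ g := by exact_mod_cast hPg
    push_cast
    linarith
end

section
/- Let T be a marked genus-labeled tree of total genus g with n total marked points which is stable, with (g, n) ≠ (2, 0), and suppose the number of vertices v with gv(v) = 0 equals g − 2 + n. Then every vertex v with gv(v) = 0 satisfies deg(v) + m(v) = 3 (i.e., is trivalent), and every vertex v with gv(v) ≠ 0 satisfies gv(v) = 1 and deg(v) + m(v) = 1 (i.e., is a genus-one leaf). -/
/-- In a stable marked genus-labeled tree of total genus `g` with `n` marked points,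
with `(g, n) ≠ (2, 0)`, if the number of genus-`0` vertices equals `g - 2 + n`, then
every genus-`0` vertex is trivalent and every other vertex is a genus-one leaf. -/
theorem genus_zero_vertices_eq_structure (V : Type*) [Fintype V] [Nonempty V] [DecidableEq V]
    (G : SimpleGraph V) [DecidableRel G.Adj] (hT : G.IsTree)
    (gv m : V → ℕ) (g n : ℕ)
    (hg : g = ∑ v, gv v) (hn : n = ∑ v, m v)
    (hstable : ∀ v, 2 * (gv v : ℤ) - 2 + G.degree v + m v > 0)
    (hne : (g, n) ≠ (2, 0))
    (hcard : ((Finset.univ.filter (fun v => gv v = 0)).card : ℤ) = (g : ℤ) - 2 + n) :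
    (∀ v, gv v = 0 → G.degree v + m v = 3) ∧
    (∀ v, gv v ≠ 0 → gv v = 1 ∧ G.degree v + m v = 1) := by
  classical
  -- degree sum formula for trees
  have hdegsum : ((∑ v, G.degree v : ℕ) : ℤ) = 2 * (Fintype.card V : ℤ) - 2 := by
    rw [SimpleGraph.sum_degrees_eq_twice_card_edges]
    have h := hT.card_edgeFinset
    push_cast [← h]
    ring
  -- positive genus vertices have deg + m ≥ 1
  have hpos : ∀ v, gv v ≠ 0 → (1 : ℤ) ≤ (G.degree v : ℤ) + m v := by
    intro v hv
    by_contra h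
    push_neg at h
    have hd0 : G.degree v = 0 := by omega
    have hm0 : m v = 0 := by omega
    have huniv : ∀ w : V, w = v := by
      intro w
      obtain ⟨p⟩ := hT.isConnected.preconnected v w
      cases p with
      | nil => rfl
      | cons hadj q =>
        exact absurd ((G.degree_pos_iff_exists_adj v).2 ⟨_, hadj⟩) (by omega)
    have huniveq : (Finset.univ : Finset V) = {v} := by
      ext w; simp [huniv w]
    have hn0 : n = m v := by rw [hn, huniveq, Finset.sum_singleton]
    have hg0 : g = gv v := by rw [hg, huniveq, Finset.sum_singleton]
    have hfilt : (Finset.univ.filter (fun w => gv w = 0)) = ∅ := by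
      rw [huniveq, Finset.filter_singleton, if_neg hv]
    rw [hfilt] at hcard
    simp at hcard
    exact hne (by
      have : g = 2 ∧ n = 0 := by omega
      simp [this.1, this.2])
  -- the two filtered sets
  set S0 := Finset.univ.filter (fun v => gv v = 0) with hS0
  set S1 := Finset.univ.filter (fun v => ¬ gv v = 0) with hS1
  have hsplit : ∀ (h : V → ℤ), ∑ v, h v = ∑ v ∈ S0, h v + ∑ v ∈ S1, h v := fun h =>
    (Finset.sum_filter_add_sum_filter_not _ _ _).symm
  have hcards : S0.card + S1.card = Fintype.card V :=
    Finset.card_filter_add_card_filter_not _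
  -- total genus is carried by S1
  have hGs : ∑ v ∈ S1, (gv v : ℤ) = (g : ℤ) := by
    have h0 : ∑ v ∈ S0, (gv v : ℤ) = 0 := by
      apply Finset.sum_eq_zero
      intro v hv
      simp only [hS0, Finset.mem_filter] at hv
      exact_mod_cast hv.2
    have := hsplit (fun v => (gv v : ℤ))
    have hgz : (g : ℤ) = ∑ v, (gv v : ℤ) := by exact_mod_cast congrArg (Nat.cast : ℕ → ℤ) hg
    simp only [hgz, this, h0, zero_add]
  -- total deg+m
  have hAB : ∑ v ∈ S0, ((G.degree v : ℤ) + m v) + ∑ v ∈ S1, ((G.degree v : ℤ) + m v)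
      = 2 * ((S0.card : ℤ) + S1.card) - 2 + n := by
    rw [← hsplit (fun v => ((G.degree v : ℤ) + m v))]
    rw [Finset.sum_add_distrib]
    have hd : ∑ v, (G.degree v : ℤ) = 2 * (Fintype.card V : ℤ) - 2 := by
      rw [← hdegsum]; push_cast; ring
    have hm : ∑ v, (m v : ℤ) = (n : ℤ) := by
      rw [hn]; push_cast; ring
    rw [hd, hm]
    have : ((S0.card : ℤ) + S1.card) = (Fintype.card V : ℤ) := by exact_mod_cast hcards
    rw [this]
  -- the key zero-sum identity
  have hkey : ∑ v ∈ S0, ((G.degree v : ℤ) + m v - 3)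
      + ∑ v ∈ S1, (((G.degree v : ℤ) + m v - 1) + ((gv v : ℤ) - 1)) = 0 := by
    simp only [Finset.sum_add_distrib, Finset.sum_sub_distrib, Finset.sum_const,
      nsmul_eq_mul, mul_one] at hAB ⊢
    linarith [hGs, hcard]
  have h0nonneg : ∀ v ∈ S0, (0 : ℤ) ≤ (G.degree v : ℤ) + m v - 3 := by
    intro v hv
    simp only [hS0, Finset.mem_filter] at hv
    have := hstable v
    rw [hv.2] at this
    push_cast at this ⊢
    omega
  have h1nonneg : ∀ v ∈ S1, (0 : ℤ) ≤ ((G.degree v : ℤ) + m v - 1) + ((gv v : ℤ) - 1) := by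
    intro v hv
    simp only [hS1, Finset.mem_filter] at hv
    have h1 := hpos v hv.2
    have h2 : (1 : ℤ) ≤ gv v := by
      have : gv v ≠ 0 := hv.2
      omega
    linarith
  have hsum0 : ∑ v ∈ S0, ((G.degree v : ℤ) + m v - 3) = 0 ∧
      ∑ v ∈ S1, (((G.degree v : ℤ) + m v - 1) + ((gv v : ℤ) - 1)) = 0 := by
    have a := Finset.sum_nonneg h0nonneg
    have b := Finset.sum_nonneg h1nonneg
    constructor <;> linarith
  have hz0 := (Finset.sum_eq_zero_iff_of_nonneg h0nonneg).1 hsum0.1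
  have hz1 := (Finset.sum_eq_zero_iff_of_nonneg h1nonneg).1 hsum0.2
  constructor
  · intro v hv
    have hmem : v ∈ S0 := by simp [hS0, hv]
    have := hz0 v hmem
    omega
  · intro v hv
    have hmem : v ∈ S1 := by simp [hS1, hv]
    have h1 := hz1 v hmem
    have h2 := hpos v hv
    have h3 : (1 : ℤ) ≤ gv v := by omega
    constructor <;> omega
end

section
/- Let T be a marked genus-labeled tree of total genus g with n total marked points which is stable, with (g, n) ≠ (2, 0), and suppose the number of vertices v with gv(v) = 0 equals g − 2 + n. Then T has exactly g vertices of positive genus (each of genus 1), exactly 2g − 2 + n vertices in total, and exactly 2g − 3 + n edges. -/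
/-- In a stable marked genus-labeled tree of total genus `g` with `n` marked points,
with `(g, n) ≠ (2, 0)`, if the number of genus-`0` vertices equals `g - 2 + n`, then
there are exactly `g` vertices of positive genus (each of genus `1`), exactly
`2g - 2 + n` vertices in total, and exactly `2g - 3 + n` edges. -/
theorem extremal_stratum_counts (V : Type*) [Fintype V] [Nonempty V] [DecidableEq V]
    (G : SimpleGraph V) [DecidableRel G.Adj] (hT : G.IsTree)
    (gv m : V → ℕ) (g n : ℕ)
    (hg : g = ∑ v, gv v) (hn : n = ∑ v, m v)
    (hstable : ∀ v, 2 * (gv v : ℤ) - 2 + G.degree v + m v > 0)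
    (hne : (g, n) ≠ (2, 0))
    (hcard : ((Finset.univ.filter (fun v => gv v = 0)).card : ℤ) = (g : ℤ) - 2 + n) :
    (Finset.univ.filter (fun v => 0 < gv v)).card = g ∧
    (∀ v, 0 < gv v → gv v = 1) ∧
    ((Fintype.card V : ℤ) = 2 * g - 2 + n) ∧
    ((G.edgeFinset.card : ℤ) = 2 * g - 3 + n) := by
  classical
  set Z := Finset.univ.filter (fun v => gv v = 0) with hZ
  set P := Finset.univ.filter (fun v => 0 < gv v) with hP
  have hPeq : P = Finset.univ.filter (fun v => ¬ gv v = 0) := by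
    apply Finset.filter_congr
    intro v _
    simp [Nat.pos_iff_ne_zero]
  have hsplit : Z.card + P.card = Fintype.card V := by
    rw [hPeq, hZ, Finset.card_filter_add_card_filter_not, Finset.card_univ]
  have hsumP : ∑ v ∈ P, gv v = g := by
    rw [hg, hP]
    exact Finset.sum_filter_of_ne (fun x _ hx => Nat.pos_of_ne_zero hx)
  have hPg : P.card ≤ g := by
    calc P.card = ∑ v ∈ P, 1 := (Finset.card_eq_sum_ones P)
    _ ≤ ∑ v ∈ P, gv v := by
        apply Finset.sum_le_sum
        intro v hv
        exact (Finset.mem_filter.mp hv).2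
    _ = g := hsumP
  have hedges : G.edgeFinset.card + 1 = Fintype.card V := hT.card_edgeFinset
  have hdegsum : ∑ v, G.degree v = 2 * G.edgeFinset.card :=
    SimpleGraph.sum_degrees_eq_twice_card_edges G
  -- total sum of degree + marks, in ℤ
  have htot : ∑ v, ((G.degree v : ℤ) + m v) = 2 * ((Fintype.card V : ℤ) - 1) + n := by
    rw [Finset.sum_add_distrib]
    have h1 : ∑ v, (G.degree v : ℤ) = ((2 * G.edgeFinset.card : ℕ) : ℤ) := by
      rw [← hdegsum]; push_cast; ring
    have h2 : ∑ v, ((m v : ℤ)) = (n : ℤ) := by rw [hn]; push_cast; ring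
    rw [h1, h2]
    have : ((Fintype.card V : ℤ)) = (G.edgeFinset.card : ℤ) + 1 := by
      exact_mod_cast hedges.symm
    push_cast
    omega
  -- g ≤ P.card
  have hgP : (g : ℤ) ≤ P.card := by
    by_cases h1 : Fintype.card V = 1
    · obtain ⟨v, hv⟩ := Fintype.card_eq_one_iff.mp h1
      have huniv : (Finset.univ : Finset V) = {v} := by
        apply Finset.eq_singleton_iff_unique_mem.mpr
        exact ⟨Finset.mem_univ v, fun w _ => hv w⟩
      have hgv : g = gv v := by rw [hg, huniv, Finset.sum_singleton]
      have hnv : n = m v := by rw [hn, huniv, Finset.sum_singleton]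
      have hd : G.degree v = 0 := by
        have he : G.edgeFinset.card = 0 := by omega
        have := hdegsum
        rw [huniv, Finset.sum_singleton, he] at this
        omega
      by_cases hv0 : gv v = 0
      · have : g = 0 := by rw [hgv, hv0]
        simp [this]
      · have hvP : v ∈ P := Finset.mem_filter.mpr ⟨Finset.mem_univ v, Nat.pos_of_ne_zero hv0⟩
        have hPv : P = {v} := by
          apply Finset.eq_singleton_iff_unique_mem.mpr
          exact ⟨hvP, fun w _ => hv w⟩
        have hZv : Z.card = 0 := by
          have h' : P.card = 1 := by rw [hPv]; simp
          omega
        have hsum2 : (g : ℤ) + n = 2 := by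
          rw [hZv] at hcard
          push_cast at hcard
          omega
        have hst := hstable v
        rw [hd, ← hgv, ← hnv] at hst
        push_cast at hst
        have hg1 : g = 1 := by
          rcases Nat.lt_or_ge g 2 with h | h
          · omega
          · exfalso
            have : g = 2 ∧ n = 0 := by omega
            exact hne (by simp [this.1, this.2])
        rw [hPv]
        simp [hg1]
    · have h2 : 2 ≤ Fintype.card V := by
        have := Fintype.card_pos (α := V); omega
      have hdeg : ∀ v, 1 ≤ G.degree v := by
        intro v
        obtain ⟨w, hw⟩ := Fintype.exists_ne_of_one_lt_card (by omega) v
        obtain ⟨p⟩ := hT.isConnected v w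
        have hnil : ¬ p.Nil := SimpleGraph.Walk.not_nil_of_ne (Ne.symm hw)
        have hadj : G.Adj v (p.getVert 1) := SimpleGraph.Walk.adj_snd hnil
        exact (SimpleGraph.degree_pos_iff_exists_adj G v).mpr ⟨_, hadj⟩
      have b1 : (3 : ℤ) * Z.card ≤ ∑ v ∈ Z, ((G.degree v : ℤ) + m v) := by
        have : ∑ v ∈ Z, (3 : ℤ) ≤ ∑ v ∈ Z, ((G.degree v : ℤ) + m v) := by
          apply Finset.sum_le_sum
          intro v hv
          have hv0 : gv v = 0 := (Finset.mem_filter.mp hv).2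
          have := hstable v
          rw [hv0] at this
          push_cast at this
          omega
        simpa [Finset.sum_const, mul_comm] using this
      have b2 : (P.card : ℤ) ≤ ∑ v ∈ P, ((G.degree v : ℤ) + m v) := by
        have : ∑ v ∈ P, (1 : ℤ) ≤ ∑ v ∈ P, ((G.degree v : ℤ) + m v) := by
          apply Finset.sum_le_sum
          intro v _
          have := hdeg v
          have hm : (0 : ℤ) ≤ m v := by positivity
          have : (1 : ℤ) ≤ G.degree v := by exact_mod_cast hdeg v
          omega
        simpa using this
      have hsplitsum : ∑ v ∈ Z, ((G.degree v : ℤ) + m v) + ∑ v ∈ P, ((G.degree v : ℤ) + m v)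
          = ∑ v, ((G.degree v : ℤ) + m v) := by
        rw [hPeq, hZ]
        exact Finset.sum_filter_add_sum_filter_not _ _ _
      have hcardV : (Fintype.card V : ℤ) = (Z.card : ℤ) + P.card := by
        exact_mod_cast hsplit.symm
      rw [htot, hcardV] at hsplitsum
      -- 3Z + P ≤ 2(Z + P) - 2 + n, Z = g - 2 + n
      have : (3 : ℤ) * Z.card + P.card ≤ 2 * ((Z.card : ℤ) + P.card - 1) + n := by
        rw [← hsplitsum] at *
        omega
      omega
  have hPgeq : P.card = g := by omega
  have hone : ∀ v, 0 < gv v → gv v = 1 := by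
    intro v hv
    by_contra hv1
    have h2le : 2 ≤ gv v := by omega
    have hvP : v ∈ P := Finset.mem_filter.mpr ⟨Finset.mem_univ v, hv⟩
    have herase : gv v + ∑ w ∈ P.erase v, gv w = ∑ w ∈ P, gv w :=
      Finset.add_sum_erase P gv hvP
    have hrest : (P.erase v).card ≤ ∑ w ∈ P.erase v, gv w := by
      calc (P.erase v).card = ∑ w ∈ P.erase v, 1 := Finset.card_eq_sum_ones _
      _ ≤ ∑ w ∈ P.erase v, gv w := by
          apply Finset.sum_le_sum
          intro w hw
          exact (Finset.mem_filter.mp (Finset.mem_of_mem_erase hw)).2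
    have hcardE : (P.erase v).card = P.card - 1 := Finset.card_erase_of_mem hvP
    have hP1 : 1 ≤ P.card := Finset.card_pos.mpr ⟨v, hvP⟩
    rw [hsumP] at herase
    omega
  have hcV : (Fintype.card V : ℤ) = 2 * g - 2 + n := by
    have h0 : (Fintype.card V : ℤ) = (Z.card : ℤ) + P.card := by exact_mod_cast hsplit.symm
    rw [h0, hcard, hPgeq]
    ring
  have hE : (G.edgeFinset.card : ℤ) + 1 = Fintype.card V := by exact_mod_cast hedges
  exact ⟨hPgeq, hone, hcV, by omega⟩
end

section
/- Let T be a marked genus-labeled tree which is stable, with total number of marked points n ≥ 1, and suppose there is a distinguished vertex v₀ with gv(v₀) = g > 0 while gv(v) = 0 for every other vertex v ≠ v₀ (so the total genus is g). Then the number of vertices v with gv(v) = 0 is at most n − 1. -/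
/-!
Every genus-`0` vertex is stable only if `deg v + m v ≥ 3`. Summing over the `N - 1` vertices other
than the genus-`g` vertex `v₀`, and using that the degrees of a tree add up to `2 (N - 1)`, the
marked points away from `v₀` number at least `N - 1 + deg v₀`. When `N ≥ 2` the vertex `v₀` has
positive degree, so `n ≥ N`; when `N = 1` this is the hypothesis `n ≥ 1`.
-/

open Finset

namespace SimpleGraph

variable {V : Type*} [Fintype V] {G : SimpleGraph V} [DecidableRel G.Adj]

theorem IsTree.sum_degrees_add_two (hT : G.IsTree) :
    ∑ v, G.degree v + 2 = 2 * Fintype.card V := by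
  rw [G.sum_degrees_eq_twice_card_edges, ← hT.card_edgeFinset]
  ring

theorem IsTree.card_add_degree_le_sum_erase_add_one [DecidableEq V] (hT : G.IsTree)
    (m : V → ℕ) (v₀ : V) (hdeg : ∀ v ≠ v₀, 3 ≤ G.degree v + m v) :
    Fintype.card V + G.degree v₀ ≤ ∑ v ∈ univ.erase v₀, m v + 1 := by
  have hcard : #(univ.erase v₀) + 1 = Fintype.card V :=
    card_erase_add_one (mem_univ v₀)
  have hlower : #(univ.erase v₀) * 3 ≤ ∑ v ∈ univ.erase v₀, (G.degree v + m v) :=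
    card_nsmul_le_sum _ _ 3 fun v hv => hdeg v (ne_of_mem_erase hv)
  have hdegrees : ∑ v ∈ univ.erase v₀, G.degree v + G.degree v₀ + 2 = 2 * Fintype.card V := by
    rw [sum_erase_add _ _ (mem_univ v₀), hT.sum_degrees_add_two]
  rw [sum_add_distrib] at hlower
  omega

end SimpleGraph

theorem rational_tails_genus_zero_bound_general (V : Type*) [Fintype V]
    (G : SimpleGraph V) [DecidableRel G.Adj] (hT : G.IsTree)
    (gv m : V → ℕ) (g n : ℕ)
    (hn : n = ∑ v, m v) (hn1 : 1 ≤ n)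
    (hstable : ∀ v, 2 * (gv v : ℤ) - 2 + G.degree v + m v > 0)
    (v₀ : V) (hv₀ : gv v₀ = g) (hgpos : 0 < g)
    (hrest : ∀ v, v ≠ v₀ → gv v = 0) :
    ((Finset.univ.filter (fun v => gv v = 0)).card : ℤ) ≤ (n : ℤ) - 1 := by
  classical
  have hgenus_zero : univ.filter (fun v => gv v = 0) = univ.erase v₀ := by
    ext v
    simp only [mem_filter, mem_univ, true_and, mem_erase, and_true]
    exact ⟨by rintro h rfl; omega, hrest v⟩
  rw [hgenus_zero, card_erase_of_mem (mem_univ v₀), card_univ]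
  suffices Fintype.card V ≤ n by
    have := Fintype.card_pos_iff.mpr ⟨v₀⟩
    omega
  rcases subsingleton_or_nontrivial V with hV | hV
  · exact (Fintype.card_le_one_iff_subsingleton.mpr hV).trans hn1
  · have hdeg₀ : 0 < G.degree v₀ := hT.connected.preconnected.degree_pos_of_nontrivial v₀
    have hstable₀ : ∀ v ≠ v₀, 3 ≤ G.degree v + m v := fun v hv => by
      have := hstable v
      rw [hrest v hv] at this
      omega
    have hmarks : ∑ v ∈ univ.erase v₀, m v ≤ n := hn ▸ sum_le_sum_of_subset (subset_univ _)
    have hbound := hT.card_add_degree_le_sum_erase_add_one m v₀ hstable₀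
    omega

/-- A stable marked genus-labeled tree with `n ≥ 1` marked points, in which a single
distinguished vertex carries all the (positive) genus `g` and all other vertices have
genus `0` (the dual graph of a curve with rational tails), has at most `n - 1`
vertices of genus `0`. -/
theorem rational_tails_genus_zero_bound (V : Type*) [Fintype V] [Nonempty V] [DecidableEq V]
    (G : SimpleGraph V) [DecidableRel G.Adj] (hT : G.IsTree)
    (gv m : V → ℕ) (g n : ℕ)
    (hn : n = ∑ v, m v) (hn1 : 1 ≤ n)
    (hstable : ∀ v, 2 * (gv v : ℤ) - 2 + G.degree v + m v > 0)
    (v₀ : V) (hv₀ : gv v₀ = g) (hgpos : 0 < g)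
    (hrest : ∀ v, v ≠ v₀ → gv v = 0) :
    ((Finset.univ.filter (fun v => gv v = 0)).card : ℤ) ≤ (n : ℤ) - 1 :=
  rational_tails_genus_zero_bound_general V G hT gv m g n hn hn1 hstable v₀ hv₀ hgpos hrest
end
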